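/- Let x be a multiplicative seminorm on the Laurent polynomial ring ℂ[t,t^{−1}] such that x(c·1) = 1 for all c ∈ ℂ* and x(t) = e^{−1}. Then for every nonzero Laurent polynomial f = Σ_j a_j t^j one has x(f) = e^{−ord(f)}, where ord(f) := min{j ∈ ℤ : a_j ≠ 0}. In particular, there is exactly one such seminorm: the restriction to ℂ[t,t^{−1}] of the t-adic absolute value on ℂ((t)) normalized by |t| = e^{−1} and trivial on ℂ*. -/

import Mathlib

/-- A multiplicative seminorm on a commutative ring `A`. -/
def IsMultSeminorm {A : Type*} [CommRing A] (x : A → ℝ) : Prop :=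
  (∀ f, 0 ≤ x f) ∧ x 0 = 0 ∧ x 1 = 1 ∧
    (∀ f g, x (f * g) = x f * x g) ∧ (∀ f g, x (f + g) ≤ x f + x g)

/-- The coefficients of a Laurent polynomial, as a finitely supported function `ℤ →₀ ℂ`. -/
def lcoeff (f : LaurentPolynomial ℂ) : ℤ →₀ ℂ := f.coeff

/-! Since `x` equals `1` on nonzero constants, it is bounded on the image of `ℕ`, and the power
trick makes it nonarchimedean. With `x (c * T ^ i) = e ^ (-i)`, the lowest term of a Laurent
polynomial has strictly the largest value among its terms, and the strict ultrametric inequality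
gives `x f = e ^ (-ord f)`. -/

theorem Real.le_of_forall_pow_le_succ_mul_pow {a b : ℝ} (hb : 0 ≤ b)
    (h : ∀ m : ℕ, a ^ m ≤ (m + 1) * b ^ m) : a ≤ b := by
  refine le_of_forall_gt_imp_ge_of_dense fun c hbc => ?_
  have hc : 0 < c := hb.trans_lt hbc
  by_contra! hca
  obtain ⟨m, hm⟩ := Real.exists_natCast_add_one_lt_pow_of_one_lt ((one_lt_div hc).2 hca)
  rw [div_pow, lt_div_iff₀ (pow_pos hc m)] at hm
  have := (h m).trans (mul_le_mul_of_nonneg_left (pow_le_pow_left₀ hb hbc.le m) (by positivity))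
  linarith

namespace IsMultSeminorm

variable {A : Type*} [CommRing A] {x : A → ℝ}

theorem map_pow (hx : IsMultSeminorm x) (f : A) (n : ℕ) : x (f ^ n) = x f ^ n := by
  induction n with
  | zero => simpa using hx.2.2.1
  | succ n ih => rw [pow_succ, pow_succ, hx.2.2.2.1, ih]

theorem map_neg (hx : IsMultSeminorm x) (f : A) : x (-f) = x f := by
  obtain ⟨hnonneg, -, hone, hmul, -⟩ := hx
  have hsq : x (-1) * x (-1) = 1 := by rw [← hmul, neg_one_mul, neg_neg, hone]
  have hneg_one : x (-1) = 1 := (mul_self_eq_one_iff.1 hsq).resolve_right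
    fun h => by linarith [hnonneg (-1)]
  rw [neg_eq_neg_one_mul, hmul, hneg_one, one_mul]

/-- The power trick: `x (a + b) ^ m` is bounded by the `m + 1` terms of the binomial expansion,
each at most `max (x a) (x b) ^ m`, and `(m + 1) ^ (1 / m) → 1`. -/
theorem isNonarchimedean_of_natCast_le_one (hx : IsMultSeminorm x)
    (hnat : ∀ n : ℕ, x n ≤ 1) : IsNonarchimedean x := by
  have hpow := hx.map_pow
  obtain ⟨hnonneg, hzero, -, hmul, hadd⟩ := hx
  intro a b
  set M := max (x a) (x b)
  have hM : 0 ≤ M := (hnonneg a).trans (le_max_left _ _)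
  refine Real.le_of_forall_pow_le_succ_mul_pow hM fun m => ?_
  have hterm : ∀ k ∈ Finset.range (m + 1),
      x (a ^ k * b ^ (m - k) * (m.choose k : A)) ≤ M ^ m := fun k hk => calc
    x (a ^ k * b ^ (m - k) * (m.choose k : A))
        = x a ^ k * x b ^ (m - k) * x (m.choose k : A) := by
      rw [hmul, hmul, hpow, hpow]
    _ ≤ M ^ k * M ^ (m - k) * 1 :=
      mul_le_mul (mul_le_mul (pow_le_pow_left₀ (hnonneg a) (le_max_left _ _) k)
        (pow_le_pow_left₀ (hnonneg b) (le_max_right _ _) _) (pow_nonneg (hnonneg b) _)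
        (pow_nonneg hM _)) (hnat _) (hnonneg _) (by positivity)
    _ = M ^ m := by
      rw [mul_one, ← pow_add, Nat.add_sub_cancel' (Nat.lt_succ_iff.1 (Finset.mem_range.1 hk))]
  calc x (a + b) ^ m = x (∑ k ∈ Finset.range (m + 1), a ^ k * b ^ (m - k) * (m.choose k : A)) := by
        rw [← hpow, add_pow]
    _ ≤ ∑ k ∈ Finset.range (m + 1), x (a ^ k * b ^ (m - k) * (m.choose k : A)) :=
        Finset.le_sum_of_subadditive x hzero.le hadd _ _
    _ ≤ (m + 1) * M ^ m := by
        simpa using Finset.sum_le_card_nsmul _ _ _ hterm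

end IsMultSeminorm

open LaurentPolynomial in
theorem LaurentPolynomial.eq_sum_C_mul_T {R : Type*} [Semiring R] (f : R[T;T⁻¹]) :
    f = ∑ i ∈ f.coeff.support, C (f.coeff i) * T i := by
  conv_lhs => rw [← AddMonoidAlgebra.sum_coeff_single f]
  simp only [Finsupp.sum, single_eq_C_mul_T]

namespace IsMultSeminorm

open LaurentPolynomial

variable {R : Type*} [CommRing R] {x : R[T;T⁻¹] → ℝ}

theorem map_T (hx : IsMultSeminorm x) {r : ℝ} (hT : x (T 1) = r) (n : ℤ) :
    x (T n) = r ^ n := by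
  have hnat : ∀ n : ℕ, x (T n) = r ^ n := fun n => by
    rw [← mul_one (n : ℤ), ← T_pow, hx.map_pow, hT]
  obtain ⟨n, rfl | rfl⟩ := Int.eq_nat_or_neg n
  · exact_mod_cast hnat n
  · have : x (T (-n)) * x (T n) = 1 := by
      rw [← hx.2.2.2.1, ← T_add, neg_add_cancel, T_zero, hx.2.2.1]
    rw [eq_inv_of_mul_eq_one_left this, hnat, zpow_neg, zpow_natCast]

theorem map_C_mul_T (hx : IsMultSeminorm x)
    (hC : ∀ c : R, c ≠ 0 → x (C c) = 1) {r : ℝ} (hT : x (T 1) = r) {c : R} (hc : c ≠ 0)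
    (n : ℤ) : x (C c * T n) = r ^ n := by
  rw [hx.2.2.2.1, hC c hc, hx.map_T hT, one_mul]

theorem isNonarchimedean_of_map_C_eq_one (hx : IsMultSeminorm x)
    (hC : ∀ c : R, c ≠ 0 → x (C c) = 1) : IsNonarchimedean x := by
  refine hx.isNonarchimedean_of_natCast_le_one fun n => ?_
  rw [← map_natCast C]
  by_cases hn : (n : R) = 0
  · rw [hn, map_zero, hx.2.1]; exact zero_le_one
  · exact (hC _ hn).le

theorem eq_zpow_of_isLeast (hx : IsMultSeminorm x)
    (hC : ∀ c : R, c ≠ 0 → x (C c) = 1) {r : ℝ} (hr₀ : 0 < r) (hr₁ : r < 1)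
    (hT : x (T 1) = r) {f : R[T;T⁻¹]} {j : ℤ} (hj : IsLeast {i | f.coeff i ≠ 0} j) :
    x f = r ^ j := by
  conv_lhs => rw [eq_sum_C_mul_T f]
  refine ((hx.isNonarchimedean_of_map_C_eq_one hC).apply_sum_eq_of_lt (fun a => (hx.map_neg a).symm)
    (Finsupp.mem_support_iff.2 hj.1) fun i hi hij => ?_).trans (hx.map_C_mul_T hC hT hj.1 j)
  rw [hx.map_C_mul_T hC hT (Finsupp.mem_support_iff.1 hi), hx.map_C_mul_T hC hT hj.1]
  exact zpow_lt_zpow_right_of_lt_one₀ hr₀ hr₁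
    (lt_of_le_of_ne (hj.2 (Finsupp.mem_support_iff.1 hi)) (Ne.symm hij))

theorem eq_exp_neg_of_isLeast (hx : IsMultSeminorm x)
    (hC : ∀ c : R, c ≠ 0 → x (algebraMap R R[T;T⁻¹] c) = 1) (hT : x (T 1) = Real.exp (-1))
    {f : R[T;T⁻¹]} {j : ℤ} (hj : IsLeast {i | f.coeff i ≠ 0} j) : x f = Real.exp (-j) := by
  rw [hx.eq_zpow_of_isLeast (fun c hc => C_eq_algebraMap c ▸ hC c hc) (Real.exp_pos _)
    (Real.exp_lt_one_iff.2 (by norm_num)) hT hj, ← Real.rpow_intCast, ← Real.exp_mul, neg_one_mul]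

end IsMultSeminorm

/-- §4 of the paper: a multiplicative seminorm on `ℂ[t,t^{-1}]` which is trivial on `ℂ^*`
and satisfies `x(t) = e^{-1}` is given by `x(f) = e^{-ord(f)}`; in particular it is the
unique such seminorm (the restriction of the `t`-adic absolute value on `ℂ((t))`). -/
theorem central_fiber_seminorm_unique
    (x : LaurentPolynomial ℂ → ℝ) (hx : IsMultSeminorm x)
    (htriv : ∀ c : ℂ, c ≠ 0 → x (algebraMap ℂ (LaurentPolynomial ℂ) c) = 1)
    (ht : x (LaurentPolynomial.T 1) = Real.exp (-1)) :
    (∀ f : LaurentPolynomial ℂ, f ≠ 0 →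
      ∀ j : ℤ, IsLeast {i : ℤ | lcoeff f i ≠ 0} j → x f = Real.exp (-(j : ℝ))) ∧
    (∀ y : LaurentPolynomial ℂ → ℝ, IsMultSeminorm y →
      (∀ c : ℂ, c ≠ 0 → y (algebraMap ℂ (LaurentPolynomial ℂ) c) = 1) →
      y (LaurentPolynomial.T 1) = Real.exp (-1) → y = x) := by
  refine ⟨fun f _ j hj => hx.eq_exp_neg_of_isLeast htriv ht hj,
    fun y hy hytriv hyt => funext fun f => ?_⟩
  rcases eq_or_ne f 0 with rfl | hf
  · rw [hy.2.1, hx.2.1]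
  have hne : f.coeff.support.Nonempty := by
    rwa [Finsupp.support_nonempty_iff, Ne, AddMonoidAlgebra.coeff_eq_zero]
  have hleast : IsLeast {i | f.coeff i ≠ 0} (f.coeff.support.min' hne) := by
    rw [← Function.support, Finsupp.fun_support_eq]
    exact f.coeff.support.isLeast_min' hne
  rw [hx.eq_exp_neg_of_isLeast htriv ht hleast, hy.eq_exp_neg_of_isLeast hytriv hyt hleast]
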